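/- arXiv:1103.1093 — 5 statements merged into one kernel-verified Lean document; each statement's English description precedes it below -/
import Mathlib

section
/- Let $G$ be a group, $F$ a field, and $V_1, V_2$ finite-dimensional $F$-vector spaces with $F[G]$-module structures. Then for any commutative $F$-algebra $A$, the canonical map $\mathrm{Hom}_{F[G]}(V_1,V_2)\otimes_F A \to \mathrm{Hom}_{A[G]}(V_1\otimes_F A, V_2\otimes_F A)$ is an isomorphism of $A$-modules. -/
open TensorProduct

/-- The `F`-submodule of `G`-equivariant linear maps `V₁ → V₂`. -/
def equivariantHom (F : Type*) [Field F] (G : Type*) [Group G]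
    (V₁ V₂ : Type*) [AddCommGroup V₁] [Module F V₁] [AddCommGroup V₂] [Module F V₂]
    (ρ₁ : Representation F G V₁) (ρ₂ : Representation F G V₂) :
    Submodule F (V₁ →ₗ[F] V₂) where
  carrier := {f | ∀ g : G, f ∘ₗ ρ₁ g = ρ₂ g ∘ₗ f}
  add_mem' := by
    intro f f' hf hf' g
    rw [LinearMap.add_comp, LinearMap.comp_add, hf g, hf' g]
  zero_mem' := by
    intro g
    rw [LinearMap.zero_comp, LinearMap.comp_zero]
  smul_mem' := by
    intro c f hf g
    rw [LinearMap.smul_comp, LinearMap.comp_smul, hf g]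

/-!
The canonical map `ψ : A ⊗ Hom_F(V₁, V₂) → Hom_A(A ⊗ V₁, A ⊗ V₂)` is bijective because `V₁` is
finite-dimensional, and the map of the theorem is `ψ` composed with the base change of the
inclusion of the equivariant maps, which stays injective because `A` is flat over `F`.
The equivariant maps are the common kernel of the maps `f ↦ f ∘ ρ₁ g - ρ₂ g ∘ f`, and `ψ` turns
their base changes into `T ↦ T ∘ (ρ₁ g)_A - (ρ₂ g)_A ∘ T`. Since `A` is free over `F`, comparing
coefficients in a basis of `A` shows that base change preserves this (possibly infinite)
intersection of kernels, which identifies the range.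
-/

namespace LinearMap

variable {R A M M' N N' : Type*} [CommRing R] [CommRing A] [Algebra R A]
  [AddCommGroup M] [Module R M] [AddCommGroup M'] [Module R M']
  [AddCommGroup N] [Module R N] [AddCommGroup N'] [Module R N']

theorem tensorProduct_tmul (a : A) (f : M →ₗ[R] N) :
    tensorProduct R A M N (a ⊗ₜ f) = a • f.baseChange A := rfl

theorem tensorProduct_bijective [Module.Projective R M] [Module.Finite R M] :
    Function.Bijective (tensorProduct R A M N) := by
  have h : ⇑(tensorProduct R A M N) =
      liftBaseChangeEquiv A ∘ lTensorHomEquivHomLTensor R M A N := by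
    funext x
    induction x using TensorProduct.induction_on with
    | zero => simp
    | tmul a f =>
      rw [Function.comp_apply, ← LinearEquiv.symm_apply_eq, tensorProduct_tmul]
      ext m
      simp [liftBaseChangeEquiv_symm_apply, smul_tmul']
    | add x y hx hy => simp only [map_add, hx, hy, Function.comp_apply]
  rw [h]
  exact (liftBaseChangeEquiv A).bijective.comp (lTensorHomEquivHomLTensor R M A N).bijective

theorem tensorProduct_baseChange_lcomp (h : M' →ₗ[R] M) (x : A ⊗[R] (M →ₗ[R] N)) :
    tensorProduct R A M' N ((lcomp R N h).baseChange A x) =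
      tensorProduct R A M N x ∘ₗ h.baseChange A := by
  induction x using TensorProduct.induction_on with
  | zero => simp
  | tmul a f =>
    rw [baseChange_tmul, tensorProduct_tmul, tensorProduct_tmul, lcomp_apply', baseChange_comp,
      smul_comp]
  | add x y hx hy => simp only [map_add, hx, hy, add_comp]

theorem tensorProduct_baseChange_compRight (h : N →ₗ[R] N') (x : A ⊗[R] (M →ₗ[R] N)) :
    tensorProduct R A M N' ((compRight R h).baseChange A x) =
      h.baseChange A ∘ₗ tensorProduct R A M N x := by
  induction x using TensorProduct.induction_on with
  | zero => simp
  | tmul a f =>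
    rw [baseChange_tmul, tensorProduct_tmul, tensorProduct_tmul, compRight_apply, baseChange_comp,
      comp_smul]
  | add x y hx hy => simp only [map_add, hx, hy, comp_add]

end LinearMap

namespace TensorProduct

variable {R A M : Type*} [CommRing R] [CommRing A] [Algebra R A] [AddCommGroup M] [Module R M]
  {ι : Type*} [DecidableEq ι] (b : Module.Basis ι R A)

theorem equivFinsuppOfBasisLeft_baseChange {N : Type*} [AddCommGroup N] [Module R N]
    (f : M →ₗ[R] N) (x : A ⊗[R] M) :
    equivFinsuppOfBasisLeft b (f.baseChange A x) =
      (equivFinsuppOfBasisLeft b x).mapRange f (map_zero f) := by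
  induction x using TensorProduct.induction_on with
  | zero => simp
  | tmul a m => ext i; simp
  | add x y hx hy => simp [hx, hy, Finsupp.mapRange_add]

theorem mem_range_baseChange_subtype_iff (S : Submodule R M) (x : A ⊗[R] M) :
    x ∈ LinearMap.range (S.subtype.baseChange A) ↔ ∀ i, equivFinsuppOfBasisLeft b x i ∈ S := by
  have mem_range_iff : x ∈ LinearMap.range (S.subtype.baseChange A) ↔
      equivFinsuppOfBasisLeft b x ∈
        Set.range (Finsupp.mapRange (α := ι) S.subtype (map_zero _)) := by
    constructor
    · rintro ⟨y, rfl⟩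
      exact ⟨_, (equivFinsuppOfBasisLeft_baseChange b _ y).symm⟩
    · rintro ⟨c, hc⟩
      refine ⟨(equivFinsuppOfBasisLeft b).symm c, (equivFinsuppOfBasisLeft b).injective ?_⟩
      rw [equivFinsuppOfBasisLeft_baseChange, LinearEquiv.apply_symm_apply, hc]
  rw [mem_range_iff, Finsupp.range_mapRange]
  simp

theorem mem_range_baseChange_subtype_iff_forall [Module.Free R A] {κ : Type*} {N : κ → Type*}
    [∀ k, AddCommGroup (N k)] [∀ k, Module R (N k)] (f : ∀ k, M →ₗ[R] N k)
    {S : Submodule R M} (hS : ∀ m, m ∈ S ↔ ∀ k, f k m = 0) (x : A ⊗[R] M) :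
    x ∈ LinearMap.range (S.subtype.baseChange A) ↔ ∀ k, (f k).baseChange A x = 0 := by
  classical
  let b := Module.Free.chooseBasis R A
  have baseChange_eq_zero_iff (k : κ) :
      (f k).baseChange A x = 0 ↔ ∀ i, f k (equivFinsuppOfBasisLeft b x i) = 0 := by
    rw [← (equivFinsuppOfBasisLeft b).map_eq_zero_iff, equivFinsuppOfBasisLeft_baseChange,
      Finsupp.ext_iff]
    rfl
  simp only [mem_range_baseChange_subtype_iff b, hS, baseChange_eq_zero_iff]
  exact forall_comm

end TensorProduct

section Representation

variable {F G V₁ V₂ : Type*} [Field F] [Group G]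
  [AddCommGroup V₁] [Module F V₁] [AddCommGroup V₂] [Module F V₂]
  (ρ₁ : Representation F G V₁) (ρ₂ : Representation F G V₂)

def intertwiningDefect (g : G) : (V₁ →ₗ[F] V₂) →ₗ[F] (V₁ →ₗ[F] V₂) :=
  LinearMap.lcomp F V₂ (ρ₁ g) - LinearMap.compRight F (ρ₂ g)

theorem mem_equivariantHom_iff_intertwiningDefect_eq_zero (f : V₁ →ₗ[F] V₂) :
    f ∈ equivariantHom F G V₁ V₂ ρ₁ ρ₂ ↔ ∀ g, intertwiningDefect ρ₁ ρ₂ g f = 0 := by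
  simp [equivariantHom, intertwiningDefect, LinearMap.lcomp_apply', sub_eq_zero]

theorem tensorProduct_baseChange_intertwiningDefect {A : Type*} [CommRing A] [Algebra F A]
    (g : G) (x : A ⊗[F] (V₁ →ₗ[F] V₂)) :
    LinearMap.tensorProduct F A V₁ V₂ ((intertwiningDefect ρ₁ ρ₂ g).baseChange A x) =
      LinearMap.tensorProduct F A V₁ V₂ x ∘ₗ (ρ₁ g).baseChange A -
        (ρ₂ g).baseChange A ∘ₗ LinearMap.tensorProduct F A V₁ V₂ x := by
  rw [intertwiningDefect, LinearMap.baseChange_sub, LinearMap.sub_apply, map_sub,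
    LinearMap.tensorProduct_baseChange_lcomp, LinearMap.tensorProduct_baseChange_compRight]

end Representation

/-- Lemma 1.1: for finite-dimensional `F[G]`-modules `V₁, V₂` and any commutative
`F`-algebra `A`, the canonical map
`Hom_{F[G]}(V₁, V₂) ⊗_F A → Hom_{A[G]}(V₁ ⊗_F A, V₂ ⊗_F A)`, `f ⊗ a ↦ a • (f ⊗ id)`,
is an isomorphism of `A`-modules: it is `A`-linear, injective, and its range is the set
of `A`-linear `G`-equivariant maps. -/
theorem stmt_0 (F : Type*) [Field F] (G : Type*) [Group G]
    (V₁ V₂ : Type*) [AddCommGroup V₁] [Module F V₁] [AddCommGroup V₂] [Module F V₂]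
    [FiniteDimensional F V₁]
    (ρ₁ : Representation F G V₁) (ρ₂ : Representation F G V₂)
    (A : Type*) [CommRing A] [Algebra F A] :
    let Φ : A ⊗[F] ↥(equivariantHom F G V₁ V₂ ρ₁ ρ₂) →ₗ[F] (A ⊗[F] V₁ →ₗ[A] A ⊗[F] V₂) :=
      TensorProduct.lift (LinearMap.mk₂ F
        (fun (a : A) (f : ↥(equivariantHom F G V₁ V₂ ρ₁ ρ₂)) =>
          a • LinearMap.baseChange A (f : V₁ →ₗ[F] V₂))
        (fun a₁ a₂ f => by simp only [add_smul])
        (fun c a f => by simp only [smul_assoc])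
        (fun a f₁ f₂ => by simp only [Submodule.coe_add, LinearMap.baseChange_add, smul_add])
        (fun c a f => by simp only [Submodule.coe_smul, LinearMap.baseChange_smul]; rw [smul_comm]))
    Function.Injective Φ ∧
    (∀ (a : A) (x : A ⊗[F] ↥(equivariantHom F G V₁ V₂ ρ₁ ρ₂)), Φ (a • x) = a • Φ x) ∧
    Set.range Φ = {T : A ⊗[F] V₁ →ₗ[A] A ⊗[F] V₂ |
      ∀ g : G, T ∘ₗ LinearMap.baseChange A (ρ₁ g) = LinearMap.baseChange A (ρ₂ g) ∘ₗ T} := by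
  intro Φ
  let S := equivariantHom F G V₁ V₂ ρ₁ ρ₂
  let ψ := LinearMap.tensorProduct F A V₁ V₂
  have hψ : Function.Bijective ψ := LinearMap.tensorProduct_bijective
  have hΦ : ⇑Φ = ψ ∘ S.subtype.baseChange A := by
    funext x
    induction x using TensorProduct.induction_on with
    | zero => simp
    | tmul a f => rfl
    | add x y hx hy => simp only [map_add, hx, hy, Function.comp_apply]
  refine ⟨?_, fun a x => by simp only [hΦ, Function.comp_apply, map_smul], ?_⟩
  · rw [hΦ, LinearMap.baseChange_eq_ltensor]
    exact hψ.injective.comp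
      (Module.Flat.lTensor_preserves_injective_linearMap S.subtype S.injective_subtype)
  · ext T
    obtain ⟨x, rfl⟩ := hψ.surjective T
    rw [hΦ, Set.range_comp, hψ.injective.mem_set_image, ← LinearMap.coe_range, SetLike.mem_coe,
      mem_range_baseChange_subtype_iff_forall _
        (mem_equivariantHom_iff_intertwiningDefect_eq_zero ρ₁ ρ₂)]
    refine forall_congr' fun g => ?_
    rw [← map_eq_zero_iff ψ hψ.injective, tensorProduct_baseChange_intertwiningDefect]
    exact sub_eq_zero (G := A ⊗[F] V₁ →ₗ[A] A ⊗[F] V₂)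
end

section
/- Let $A$ be an Artinian local ring with residue field $F = A/\mathfrak{m}_A$, let $G$ be a group, and let $\rho: G \to \mathrm{GL}_r(A)$ be a group homomorphism with reduction $\rho_0: G \to \mathrm{GL}_r(F)$ modulo $\mathfrak{m}_A$. Regard $A^r$ (resp. $F^r$) as a module over $A[G]$ (resp. $F[G]$) via $\rho$ (resp. $\rho_0$). If every element of $\mathrm{End}_{F[G]}(F^r)$ is a scalar multiplication, then every element of $\mathrm{End}_{A[G]}(A^r)$ is a scalar multiplication. -/
/-!
The maximal ideal `m` of an Artinian local ring is nilpotent, so it suffices to show that a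
commuting `S` which is scalar modulo an ideal `I` is scalar modulo `m * I`. After subtracting the
scalar, the entries of `S` lie in `I`, and the linear functionals `I → A/m` separate the points
of the `A/m`-vector space `I / m I`. Applying such a functional entrywise to `S` gives a matrix
over `A/m` commuting with the reduction of `ρ`, hence scalar; so `S` is scalar modulo `m I`.
-/

section

open Matrix

variable {A : Type*} [CommRing A] {m : Ideal A}
  {M : Type*} [AddCommGroup M] [Module A M] {n : Type*}

theorem Submodule.mem_smul_top_of_forall_linearMap_eq_zero [m.IsMaximal] {x : M}
    (h : ∀ ψ : M →ₗ[A] A ⧸ m, ψ x = 0) : x ∈ m • (⊤ : Submodule A M) := by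
  let := Ideal.Quotient.field m
  rw [← Submodule.Quotient.mk_eq_zero, ← Module.forall_dual_apply_eq_zero_iff (A ⧸ m)]
  exact fun φ ↦ h ((φ.restrictScalars A).comp (m • ⊤ : Submodule A M).mkQ)

theorem Matrix.exists_sub_diagonal_mem_smul_top [m.IsMaximal] [DecidableEq n] (X : Matrix n n M)
    (h : ∀ ψ : M →ₗ[A] A ⧸ m, ∃ c : A ⧸ m, X.map ψ = c • (1 : Matrix n n (A ⧸ m))) :
    ∃ v : M, ∀ i j, X i j - diagonal (fun _ ↦ v) i j ∈ m • (⊤ : Submodule A M) := by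
  cases isEmpty_or_nonempty n with
  | inl _ => exact ⟨0, fun i ↦ isEmptyElim i⟩
  | inr hn =>
    obtain ⟨i₀⟩ := hn
    refine ⟨X i₀ i₀, fun i j ↦ Submodule.mem_smul_top_of_forall_linearMap_eq_zero fun ψ ↦ ?_⟩
    obtain ⟨c, hc⟩ := h ψ
    have hX i j : ψ (X i j) = if i = j then c else 0 := by
      simpa [one_apply] using congr_fun₂ hc i j
    by_cases hij : i = j <;> simp [hij, hX]

theorem Matrix.map_mul_map_mk [Fintype n] (ψ : M →ₗ[A] A ⧸ m) (X : Matrix n n M)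
    (P : Matrix n n A) (i l : n) :
    (X.map ψ * P.map (Ideal.Quotient.mk m)) i l = ψ (∑ j, P j l • X i j) := by
  simp [mul_apply, mul_comm, Algebra.smul_def]

theorem Matrix.map_mk_mul_map [Fintype n] (ψ : M →ₗ[A] A ⧸ m) (X : Matrix n n M)
    (P : Matrix n n A) (i l : n) :
    (P.map (Ideal.Quotient.mk m) * X.map ψ) i l = ψ (∑ j, P i j • X j l) := by
  simp [mul_apply, Algebra.smul_def]

variable {ι : Type*} [Fintype n] [DecidableEq n] [m.IsMaximal] {ρ : ι → Matrix n n A}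

theorem Matrix.exists_sub_smul_one_mem_mul_of_forall_mul_comm
    (h₀ : ∀ T : Matrix n n (A ⧸ m), (∀ g, T * (ρ g).map (Ideal.Quotient.mk m) =
      (ρ g).map (Ideal.Quotient.mk m) * T) → ∃ c : A ⧸ m, T = c • 1)
    {I : Ideal A} {S : Matrix n n A} (hS : ∀ g, S * ρ g = ρ g * S) (hSI : ∀ i j, S i j ∈ I) :
    ∃ c : A, ∀ i j, (S - c • 1) i j ∈ m * I := by
  let X : Matrix n n I := of fun i j ↦ ⟨S i j, hSI i j⟩
  have hX (g : ι) i l : ∑ j, ρ g j l • X i j = ∑ j, ρ g i j • X j l := by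
    apply Subtype.ext
    simpa [X, mul_apply, mul_comm] using congr_fun₂ (hS g) i l
  obtain ⟨v, hv⟩ := X.exists_sub_diagonal_mem_smul_top (m := m) fun ψ ↦
    h₀ _ fun g ↦ ext fun i l ↦ by rw [map_mul_map_mk, map_mk_mul_map, hX]
  refine ⟨v, fun i j ↦ ?_⟩
  have := Submodule.mem_map_of_mem (f := I.subtype) (hv i j)
  rw [Submodule.map_smul'', Submodule.map_subtype_top] at this
  by_cases hij : i = j <;> simpa [X, hij, one_apply] using this

theorem Matrix.exists_eq_smul_one_of_forall_mul_comm (hm : IsNilpotent m)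
    (h₀ : ∀ T : Matrix n n (A ⧸ m), (∀ g, T * (ρ g).map (Ideal.Quotient.mk m) =
      (ρ g).map (Ideal.Quotient.mk m) * T) → ∃ c : A ⧸ m, T = c • 1)
    {S : Matrix n n A} (hS : ∀ g, S * ρ g = ρ g * S) : ∃ a : A, S = a • 1 := by
  have approx (k : ℕ) : ∃ a : A, ∀ i j, (S - a • 1) i j ∈ m ^ k := by
    induction k with
    | zero => exact ⟨0, by simp⟩
    | succ k ih =>
      obtain ⟨a, ha⟩ := ih
      have hcomm g : (S - a • 1) * ρ g = ρ g * (S - a • 1) := by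
        simp [sub_mul, mul_sub, hS g]
      obtain ⟨c, hc⟩ := exists_sub_smul_one_mem_mul_of_forall_mul_comm h₀ hcomm ha
      exact ⟨a + c, by simpa [pow_succ', add_smul, sub_sub] using hc⟩
  obtain ⟨k, hk⟩ := hm
  obtain ⟨a, ha⟩ := approx k
  exact ⟨a, sub_eq_zero.mp <| ext fun i j ↦ by simpa [hk] using ha i j⟩

end

/-- Lemma 1.2: if every `F[G]`-endomorphism of `F^r` (via the reduction `ρ₀` of `ρ`
modulo the maximal ideal of the Artinian local ring `A`) is a scalar multiplication,
then every `A[G]`-endomorphism of `A^r` (via `ρ`) is a scalar multiplication. -/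
theorem stmt_1 (A : Type*) [CommRing A] [IsLocalRing A] [IsArtinianRing A]
    (G : Type*) [Group G] (r : ℕ)
    (ρ : G →* Matrix.GeneralLinearGroup (Fin r) A)
    (ρ₀ : G →* Matrix.GeneralLinearGroup (Fin r) (A ⧸ IsLocalRing.maximalIdeal A))
    (hred : ∀ g : G, (ρ₀ g : Matrix (Fin r) (Fin r) (A ⧸ IsLocalRing.maximalIdeal A)) =
      (ρ g : Matrix (Fin r) (Fin r) A).map (Ideal.Quotient.mk (IsLocalRing.maximalIdeal A)))
    (h₀ : ∀ T : Matrix (Fin r) (Fin r) (A ⧸ IsLocalRing.maximalIdeal A),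
      (∀ g : G, T * ρ₀ g = ρ₀ g * T) →
      ∃ c : A ⧸ IsLocalRing.maximalIdeal A, T = c • (1 : Matrix (Fin r) (Fin r) (A ⧸ IsLocalRing.maximalIdeal A))) :
    ∀ S : Matrix (Fin r) (Fin r) A, (∀ g : G, S * ρ g = ρ g * S) →
      ∃ a : A, S = a • (1 : Matrix (Fin r) (Fin r) A) := by
  have hm : IsNilpotent (IsLocalRing.maximalIdeal A) := by
    simpa [IsLocalRing.jacobson_eq_maximalIdeal ⊥ bot_ne_top] using
      IsArtinianRing.isNilpotent_jacobson_bot (R := A)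
  exact fun S hS ↦ Matrix.exists_eq_smul_one_of_forall_mul_comm hm
    (fun T hT ↦ h₀ T fun g ↦ by rw [hred]; exact hT g) hS
end

section
/- Let $G$ be a group, $F$ a field, $A', A$ Artinian local $F$-algebras with residue field $F$, $\phi: A' \to A$ a surjective $F$-algebra homomorphism, and $\rho_0: G \to \mathrm{GL}_r(F)$ a homomorphism. Regard $A'^r$ and $A^r$ as $G$-modules via $\rho_0$ (by scalar extension). Then the canonical map $\mathrm{Aut}_{A'[G]}(A'^r) \to \mathrm{Aut}_{A[G]}(A^r)$ induced by $\phi$ is surjective. -/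
/-!
Choose an `F`-basis of `A` and split a matrix `Q` over `A` into coordinate matrices over `F`,
`Q = ∑ b • Q_b`. Since `ρ₀` has entries in `F`, taking coordinates commutes with multiplying by
`ρ₀ g`, so each `Q_b` commutes with `ρ₀`. Lifting the finitely many basis vectors `b` along the
surjection `φ` gives a lift `Q' = ∑ b' • Q_b` that still commutes with `ρ₀`, and `Q'` is invertible
because a surjection out of a local ring reflects units (apply this to `det Q'`).
-/

section CoordinateMatrices

variable {F : Type*} [Field F]

section LinearFunctional

variable {A : Type*} [Ring A] [Algebra F A] {l m n : Type*} [Fintype m]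

theorem Matrix.map_mul_map_algebraMap (f : A →ₗ[F] F) (X : Matrix l m A) (Y : Matrix m n F) :
    (X * Y.map (algebraMap F A)).map f = X.map f * Y := by
  ext i j
  simp [Matrix.mul_apply, map_sum, ← Algebra.commutes, ← Algebra.smul_def, mul_comm]

theorem Matrix.map_map_algebraMap_mul (f : A →ₗ[F] F) (Y : Matrix l m F) (X : Matrix m n A) :
    (Y.map (algebraMap F A) * X).map f = Y * X.map f := by
  ext i j
  simp [Matrix.mul_apply, map_sum, ← Algebra.smul_def]

theorem Commute.map_linearMap_of_map_algebraMap [Fintype n] (f : A →ₗ[F] F)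
    {X : Matrix n n A} {Y : Matrix n n F} (h : Commute X (Y.map (algebraMap F A))) :
    Commute (X.map f) Y := by
  rw [Commute, SemiconjBy, ← Matrix.map_mul_map_algebraMap, ← Matrix.map_map_algebraMap_mul, h.eq]

end LinearFunctional

theorem Matrix.exists_finset_eq_sum_smul_map {A ι : Type*} [CommRing A] [Algebra F A]
    {m n : Type*} [Fintype m] [Fintype n]
    (B : Module.Basis ι F A) (X : Matrix m n A) :
    ∃ s : Finset ι, X = ∑ b ∈ s, B b • (X.map (B.coord b)).map (algebraMap F A) := by
  classical
  refine ⟨Finset.univ.biUnion fun p : m × n => (B.repr (X p.1 p.2)).support, ?_⟩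
  ext i j
  simp only [Matrix.sum_apply, Matrix.smul_apply, Matrix.map_apply, Module.Basis.coord_apply,
    smul_eq_mul]
  conv_lhs => rw [← B.linearCombination_repr (X i j), Finsupp.linearCombination_apply]
  rw [Finsupp.sum_of_support_subset _ (Finset.subset_biUnion_of_mem
    (fun p : m × n => (B.repr (X p.1 p.2)).support) (Finset.mem_univ (i, j))) _
    fun b _ => zero_smul F (B b)]
  simp only [Algebra.smul_def, mul_comm]

theorem Matrix.exists_commute_lift_of_surjective {A' A : Type*} [CommRing A'] [Algebra F A']
    [CommRing A] [Algebra F A] (φ : A' →ₐ[F] A) (hφ : Function.Surjective φ)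
    {n ι : Type*} [Fintype n] [DecidableEq n] (ρ : ι → Matrix n n F) (X : Matrix n n A)
    (hX : ∀ i, Commute X ((ρ i).map (algebraMap F A))) :
    ∃ X' : Matrix n n A', (∀ i, Commute X' ((ρ i).map (algebraMap F A'))) ∧ X'.map φ = X := by
  let B := Module.Basis.ofVectorSpace F A
  obtain ⟨s, hs⟩ := X.exists_finset_eq_sum_smul_map B
  choose lift hlift using hφ
  have hcomm (b) (i) : Commute (X.map (B.coord b)) (ρ i) :=
    (hX i).map_linearMap_of_map_algebraMap _
  refine ⟨∑ b ∈ s, lift (B b) • (X.map (B.coord b)).map (algebraMap F A'), fun i => ?_, ?_⟩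
  · exact Commute.sum_left _ _ _ fun b _ =>
      ((hcomm b i).map (algebraMap F A').mapMatrix).smul_left _
  · conv_rhs => rw [hs]
    ext k l
    simp [Matrix.sum_apply, hlift]

theorem Matrix.isUnit_of_isUnit_map {R S : Type*} [CommRing R] [IsLocalRing R] [CommRing S]
    [Nontrivial S] (f : R →+* S) (hf : Function.Surjective f) {n : Type*} [Fintype n]
    [DecidableEq n] {M : Matrix n n R} (hM : IsUnit (M.map f)) : IsUnit M := by
  have := IsLocalHom.of_surjective f hf
  rw [Matrix.isUnit_iff_isUnit_det, ← isUnit_map_iff f, RingHom.map_det]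
  exact (Matrix.isUnit_iff_isUnit_det _).mp hM

end CoordinateMatrices

theorem stmt_6_general (F : Type*) [Field F] (G : Type*) [Group G] (r : ℕ)
    (ρ₀ : G →* Matrix.GeneralLinearGroup (Fin r) F)
    (A' A : Type*) [CommRing A'] [IsLocalRing A'] [Algebra F A']
    [CommRing A] [IsLocalRing A] [Algebra F A]
    (φ : A' →ₐ[F] A) (hφ : Function.Surjective φ) :
    ∀ Q : Matrix.GeneralLinearGroup (Fin r) A,
      (∀ g : G, (Q : Matrix (Fin r) (Fin r) A)
            * (ρ₀ g : Matrix (Fin r) (Fin r) F).map (algebraMap F A)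
          = (ρ₀ g : Matrix (Fin r) (Fin r) F).map (algebraMap F A)
            * (Q : Matrix (Fin r) (Fin r) A)) →
      ∃ Q' : Matrix.GeneralLinearGroup (Fin r) A',
        (∀ g : G, (Q' : Matrix (Fin r) (Fin r) A')
              * (ρ₀ g : Matrix (Fin r) (Fin r) F).map (algebraMap F A')
            = (ρ₀ g : Matrix (Fin r) (Fin r) F).map (algebraMap F A')
              * (Q' : Matrix (Fin r) (Fin r) A')) ∧
        Units.map ((φ : A' →+* A).mapMatrix).toMonoidHom Q' = Q := by
  intro Q hQ
  obtain ⟨X', hcomm, hmap⟩ := Matrix.exists_commute_lift_of_surjective φ hφ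
    (fun g => (ρ₀ g : Matrix (Fin r) (Fin r) F)) (Q : Matrix (Fin r) (Fin r) A) hQ
  obtain ⟨Q', rfl⟩ := Matrix.isUnit_of_isUnit_map (φ : A' →+* A) hφ (hmap ▸ Q.isUnit)
  exact ⟨Q', hcomm, Units.ext hmap⟩

/-- For a surjective homomorphism `φ : A' → A` of Artinian local `F`-algebras with
residue field `F`, and `ρ₀ : G → GL_r(F)`, the canonical map
`Aut_{A'[G]}(A'^r) → Aut_{A[G]}(A^r)` is surjective. -/
theorem stmt_6 (F : Type*) [Field F] (G : Type*) [Group G] (r : ℕ)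
    (ρ₀ : G →* Matrix.GeneralLinearGroup (Fin r) F)
    (A' A : Type*) [CommRing A'] [IsLocalRing A'] [IsArtinianRing A'] [Algebra F A']
    [CommRing A] [IsLocalRing A] [IsArtinianRing A] [Algebra F A]
    (hA' : Function.Bijective (algebraMap F (A' ⧸ IsLocalRing.maximalIdeal A')))
    (hA : Function.Bijective (algebraMap F (A ⧸ IsLocalRing.maximalIdeal A)))
    (φ : A' →ₐ[F] A) (hφ : Function.Surjective φ) :
    ∀ Q : Matrix.GeneralLinearGroup (Fin r) A,
      (∀ g : G, (Q : Matrix (Fin r) (Fin r) A)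
            * (ρ₀ g : Matrix (Fin r) (Fin r) F).map (algebraMap F A)
          = (ρ₀ g : Matrix (Fin r) (Fin r) F).map (algebraMap F A)
            * (Q : Matrix (Fin r) (Fin r) A)) →
      ∃ Q' : Matrix.GeneralLinearGroup (Fin r) A',
        (∀ g : G, (Q' : Matrix (Fin r) (Fin r) A')
              * (ρ₀ g : Matrix (Fin r) (Fin r) F).map (algebraMap F A')
            = (ρ₀ g : Matrix (Fin r) (Fin r) F).map (algebraMap F A')
              * (Q' : Matrix (Fin r) (Fin r) A')) ∧
        Units.map ((φ : A' →+* A).mapMatrix).toMonoidHom Q' = Q :=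
  stmt_6_general F G r ρ₀ A' A φ hφ
end

section
/- Let $\phi': A' \to A$ and $\phi'': A'' \to A$ be homomorphisms of commutative rings with $\phi''$ surjective. Then the canonical map $\mathrm{GL}_r(A' \times_A A'') \to \mathrm{GL}_r(A') \times_{\mathrm{GL}_r(A)} \mathrm{GL}_r(A'')$ is a group isomorphism. -/
/-!
The matrix ring over the fiber product `A' ×_A A''` is the fiber product of the matrix rings,
entrywise. Taking units commutes with fiber products of monoids: a pair of units `(u', u'')`
agreeing over `A` lifts to some `x`, the pair of inverses lifts to some `y`, and `x * y = 1 = y * x`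
because both sides have the same images in the two factors.
-/

open Function Set

section UnitsFiberProduct

variable {M M₁ M₂ N : Type*} [Monoid M] [Monoid M₁] [Monoid M₂] [Monoid N]
  {p₁ : M →* M₁} {p₂ : M →* M₂} {φ₁ : M₁ →* N} {φ₂ : M₂ →* N}

theorem Units.map_prod_injective (hinj : Injective fun x => (p₁ x, p₂ x)) :
    Injective ((Units.map p₁).prod (Units.map p₂)) := fun _ _ h =>
  Units.ext <| hinj <| congrArg (fun q => ((q.1 : M₁), (q.2 : M₂))) h

theorem Units.range_map_prod (hinj : Injective fun x => (p₁ x, p₂ x))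
    (hrange : range (fun x => (p₁ x, p₂ x)) = {q | φ₁ q.1 = φ₂ q.2}) :
    range ((Units.map p₁).prod (Units.map p₂)) =
      {u | Units.map φ₁ u.1 = Units.map φ₂ u.2} := by
  ext ⟨u₁, u₂⟩
  constructor
  · rintro ⟨u, hu⟩
    cases hu
    exact Units.ext (hrange.le ⟨u, rfl⟩)
  · intro (hu : Units.map φ₁ u₁ = Units.map φ₂ u₂)
    have hu_inv : Units.map φ₁ u₁⁻¹ = Units.map φ₂ u₂⁻¹ := by rw [map_inv, map_inv, hu]
    obtain ⟨x, hx⟩ := hrange.ge (show ((u₁ : M₁), (u₂ : M₂)) ∈ {q | φ₁ q.1 = φ₂ q.2} from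
      congrArg Units.val hu)
    obtain ⟨y, hy⟩ := hrange.ge (show ((↑u₁⁻¹ : M₁), (↑u₂⁻¹ : M₂)) ∈ {q | φ₁ q.1 = φ₂ q.2} from
      congrArg Units.val hu_inv)
    simp only [Prod.mk.injEq] at hx hy
    have hxy : x * y = 1 := hinj <| by simp [hx, hy]
    have hyx : y * x = 1 := hinj <| by simp [hx, hy]
    exact ⟨⟨x, y, hxy, hyx⟩, Prod.ext (Units.ext hx.1) (Units.ext hx.2)⟩

end UnitsFiberProduct

section MatrixFiberProduct

variable {m n α β γ δ : Type*} {f : α → β} {g : α → γ}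

theorem Matrix.map_prod_injective (hinj : Injective fun a => (f a, g a)) :
    Injective fun M : Matrix m n α => (M.map f, M.map g) := fun M N h => by
  ext i j
  exact hinj <| Prod.ext (congrFun (congrFun (congrArg Prod.fst h) i) j)
    (congrFun (congrFun (congrArg Prod.snd h) i) j)

theorem Matrix.range_map_prod {φ₁ : β → δ} {φ₂ : γ → δ}
    (hrange : range (fun a => (f a, g a)) = {q | φ₁ q.1 = φ₂ q.2}) :
    range (fun M : Matrix m n α => (M.map f, M.map g)) =
      {q | q.1.map φ₁ = q.2.map φ₂} := by
  ext ⟨M₁, M₂⟩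
  constructor
  · rintro ⟨M, hM⟩
    cases hM
    ext i j
    exact hrange.le ⟨M i j, rfl⟩
  · intro hM
    choose M hM using fun i j =>
      hrange.ge (show (M₁ i j, M₂ i j) ∈ {q | φ₁ q.1 = φ₂ q.2} from congrFun (congrFun hM i) j)
    exact ⟨M, Prod.ext (Matrix.ext fun i j => congrArg Prod.fst (hM i j))
      (Matrix.ext fun i j => congrArg Prod.snd (hM i j))⟩

end MatrixFiberProduct

theorem stmt_13_general (A' A'' A : Type*) [CommRing A'] [CommRing A''] [CommRing A]
    (φ' : A' →+* A) (φ'' : A'' →+* A) (r : ℕ) :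
    let R : Subring (A' × A'') :=
      RingHom.eqLocus (φ'.comp (RingHom.fst A' A'')) (φ''.comp (RingHom.snd A' A''))
    let π' : R →+* A' := (RingHom.fst A' A'').comp R.subtype
    let π'' : R →+* A'' := (RingHom.snd A' A'').comp R.subtype
    let f : Matrix.GeneralLinearGroup (Fin r) R →*
        Matrix.GeneralLinearGroup (Fin r) A' × Matrix.GeneralLinearGroup (Fin r) A'' :=
      (Units.map π'.mapMatrix.toMonoidHom).prod (Units.map π''.mapMatrix.toMonoidHom)
    Function.Injective f ∧
      Set.range f = {p : Matrix.GeneralLinearGroup (Fin r) A' ×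
          Matrix.GeneralLinearGroup (Fin r) A'' |
        Units.map φ'.mapMatrix.toMonoidHom p.1 = Units.map φ''.mapMatrix.toMonoidHom p.2} := by
  intro R π' π'' f
  have hinj : Injective fun a : R => (π' a, π'' a) := fun _ _ h => Subtype.ext h
  have hrange : range (fun a : R => (π' a, π'' a)) = {q | φ' q.1 = φ'' q.2} :=
    Set.ext fun q => ⟨by rintro ⟨a, rfl⟩; exact a.2, fun hq => ⟨⟨q, hq⟩, rfl⟩⟩
  have hmat_inj := Matrix.map_prod_injective (m := Fin r) (n := Fin r) hinj
  exact ⟨Units.map_prod_injective hmat_inj,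
    Units.range_map_prod hmat_inj (Matrix.range_map_prod hrange)⟩

set_option maxHeartbeats 1000000 in
/-- For ring homomorphisms `φ' : A' → A` and `φ'' : A'' → A` with `φ''` surjective, the
canonical (monoid hom) map `GL_r(A' ×_A A'') → GL_r(A') ×_{GL_r(A)} GL_r(A'')` is a group
isomorphism: it is injective and its range is exactly the fiber product of groups. -/
theorem stmt_13 (A' A'' A : Type*) [CommRing A'] [CommRing A''] [CommRing A]
    (φ' : A' →+* A) (φ'' : A'' →+* A) (hφ'' : Function.Surjective φ'') (r : ℕ) :
    let R : Subring (A' × A'') :=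
      RingHom.eqLocus (φ'.comp (RingHom.fst A' A'')) (φ''.comp (RingHom.snd A' A''))
    let π' : R →+* A' := (RingHom.fst A' A'').comp R.subtype
    let π'' : R →+* A'' := (RingHom.snd A' A'').comp R.subtype
    let f : Matrix.GeneralLinearGroup (Fin r) R →*
        Matrix.GeneralLinearGroup (Fin r) A' × Matrix.GeneralLinearGroup (Fin r) A'' :=
      (Units.map π'.mapMatrix.toMonoidHom).prod (Units.map π''.mapMatrix.toMonoidHom)
    Function.Injective f ∧
      Set.range f = {p : Matrix.GeneralLinearGroup (Fin r) A' ×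
          Matrix.GeneralLinearGroup (Fin r) A'' |
        Units.map φ'.mapMatrix.toMonoidHom p.1 = Units.map φ''.mapMatrix.toMonoidHom p.2} :=
  stmt_13_general A' A'' A φ' φ'' r
end

section
/- Let $G$ be a group, $F$ a field, $\rho_0: G \to \mathrm{GL}_r(F)$ a homomorphism such that $\mathrm{End}_{F[G]}(F^r)$ consists of scalar multiplications, and let $\phi: A' \to A$ be a homomorphism of Artinian local $F$-algebras with residue field $F$, with kernel $\mathfrak{a}$. Let $\rho_1, \rho_2: G \to \mathrm{GL}_r(A')$ be homomorphisms with $\rho_1 \equiv \rho_2 \pmod{\mathfrak{a}}$ and $\rho_i \equiv \rho_0 \pmod{\mathfrak{m}_{A'}}$. If there exists $P \in \mathrm{GL}_r(A')$ with $P^{-1}\rho_1 P = \rho_2$, then there exists $P_1 \in \mathrm{GL}_r(A')$ with $P_1 \equiv I \pmod{\mathfrak{a}}$ and $P_1^{-1}\rho_1 P_1 = \rho_2$. -/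
/-!
Modulo `𝔞`, the matrix `φ(P)` commutes with the common reduction `φ(ρ₁) = φ(ρ₂)`, which lifts
`ρ₀` to the Artinian local ring `A`. The commutant of such a lift is still scalar: if `T` is
scalar modulo `𝔪^k`, then `T` commutes with `ρ₀` modulo `𝔪^(k+1)`; applying the `F`-linear
functionals of `A ⧸ 𝔪^(k+1)` entrywise turns this into matrices over `F` commuting with `ρ₀`,
so `T` is scalar modulo `𝔪^(k+1)`. Hence `φ(P) = c • 1`, where `c = φ(P₀₀)` and `P₀₀` is a unit
because `φ` is local. Scalars are central, so `P₁ = P · P₀₀⁻¹` still conjugates `ρ₁` to `ρ₂`,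
and `φ(P₁) = 1`.
-/

open IsLocalRing

theorem IsLocalRing.isLocalHom_of_krullDimLE_zero {R S : Type*} [CommRing R] [IsLocalRing R]
    [Ring.KrullDimLE 0 R] [Ring S] [Nontrivial S] (f : R →+* S) : IsLocalHom f :=
  ⟨fun _ ha => by_contra fun h =>
    ((Ring.KrullDimLE.isNilpotent_iff_mem_nonunits.mpr h).map f).not_isUnit ha⟩

namespace Ideal
variable {R : Type*} [CommRing R] {n : Type*} [Fintype n] [DecidableEq n]

theorem mul_mem_matrix_mul {I J : Ideal R} {M N : Matrix n n R} (hM : M ∈ I.matrix n)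
    (hN : N ∈ J.matrix n) : M * N ∈ (I * J).matrix n :=
  (I * J).mem_matrix n _ |>.mpr fun i j => sum_mem _ fun k _ =>
    mul_mem_mul ((mem_matrix n I M).mp hM i k) ((mem_matrix n J N).mp hN k j)

theorem mem_matrix_iff_mapMatrix_eq_zero (I : Ideal R) (M : Matrix n n R) :
    M ∈ I.matrix n ↔ (Quotient.mk I).mapMatrix M = 0 := by
  simp [mem_matrix, ← Matrix.ext_iff, Quotient.eq_zero_iff_mem]

end Ideal

namespace Matrix

section
variable {F B n : Type*} [CommSemiring F] [Semiring B] [Algebra F B] [Fintype n]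

theorem map_mul_map_algebraMap_s17 (l : B →ₗ[F] F) (T : Matrix n n B) (M : Matrix n n F) :
    (T * M.map (algebraMap F B)).map l = T.map l * M := by
  ext i j
  simp [mul_apply, ← Algebra.commutes, ← Algebra.smul_def, mul_comm]

theorem map_map_algebraMap_mul_s17 (l : B →ₗ[F] F) (T : Matrix n n B) (M : Matrix n n F) :
    (M.map (algebraMap F B) * T).map l = M * T.map l := by
  ext i j
  simp [mul_apply, ← Algebra.smul_def]

end

theorem commutator_mem_matrix_pow_succ {A n : Type*} [CommRing A] [Fintype n] [DecidableEq n]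
    {I : Ideal A} {k : ℕ} {S S₀ T : Matrix n n A}
    (hS : S - S₀ ∈ I.matrix n) (hT : T ∈ (I ^ k).matrix n) (hTS : Commute T S) :
    T * S₀ - S₀ * T ∈ (I ^ (k + 1)).matrix n := by
  have h₁ := Ideal.mul_mem_matrix_mul hS hT
  have h₂ := Ideal.mul_mem_matrix_mul hT hS
  rw [← pow_succ'] at h₁
  rw [← pow_succ] at h₂
  convert sub_mem h₁ h₂ using 1
  rw [sub_mul, mul_sub, hTS.eq]
  abel

def HasScalarCommutant {R ι n : Type*} [CommSemiring R] [Fintype n] [DecidableEq n]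
    (ρ : ι → Matrix n n R) : Prop :=
  ∀ T : Matrix n n R, (∀ g, T * ρ g = ρ g * T) → ∃ c : R, T = c • 1

namespace HasScalarCommutant

variable {F ι n : Type*} [Field F] [Fintype n] [DecidableEq n] {ρ : ι → Matrix n n F}

theorem map_algebraMap (hρ : HasScalarCommutant ρ) (B : Type*) [CommRing B] [Algebra F B] :
    HasScalarCommutant fun g => (ρ g).map (algebraMap F B) := by
  intro T hT
  cases isEmpty_or_nonempty n
  · exact ⟨0, Subsingleton.elim _ _⟩
  obtain ⟨k⟩ : Nonempty n := inferInstance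
  refine ⟨T k k, ext fun i j => sub_eq_zero.mp <|
    (Module.forall_dual_apply_eq_zero_iff F _).mp fun l => ?_⟩
  obtain ⟨c, hc⟩ := hρ (T.map l) fun g => by
    rw [← map_mul_map_algebraMap_s17, hT, map_map_algebraMap_mul_s17]
  have hl : ∀ i j, l (T i j) = c * (1 : Matrix n n F) i j := fun i j => by
    simpa using congrFun₂ hc i j
  rcases eq_or_ne i j with rfl | hij
  · simp [hl]
  · simp [hl, hij]

variable {A : Type*} [CommRing A] [Algebra F A]

theorem exists_sub_smul_one_mem_matrix (hρ : HasScalarCommutant ρ) (J : Ideal A)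
    (T : Matrix n n A)
    (hT : ∀ g, T * (ρ g).map (algebraMap F A) - (ρ g).map (algebraMap F A) * T ∈ J.matrix n) :
    ∃ c : A, T - c • 1 ∈ J.matrix n := by
  set π := Ideal.Quotient.mk J
  have hρπ : ∀ g, π.mapMatrix ((ρ g).map (algebraMap F A))
      = (ρ g).map (algebraMap F (A ⧸ J)) := fun g => by ext; simp [π]
  obtain ⟨c, hc⟩ := hρ.map_algebraMap (A ⧸ J) (π.mapMatrix T) fun g => by
    have := (J.mem_matrix_iff_mapMatrix_eq_zero _).mp (hT g)
    rwa [map_sub, map_mul, map_mul, sub_eq_zero, hρπ] at this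
  obtain ⟨d, rfl⟩ := Ideal.Quotient.mk_surjective c
  refine ⟨d, (J.mem_matrix_iff_mapMatrix_eq_zero _).mpr ?_⟩
  rw [map_sub, hc, sub_eq_zero]
  ext i j
  rcases eq_or_ne i j with rfl | hij
  · simp
  · simp [hij]

theorem of_sub_mem_maximalIdeal [IsLocalRing A] [IsArtinianRing A] (hρ : HasScalarCommutant ρ)
    {S : ι → Matrix n n A}
    (hS : ∀ g, S g - (ρ g).map (algebraMap F A) ∈ (maximalIdeal A).matrix n) :
    HasScalarCommutant S := by
  intro T hT
  obtain ⟨N, hN⟩ := (isArtinianRing_iff_isNilpotent_maximalIdeal A).mp ‹_›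
  suffices ∀ k, ∃ c : A, T - c • 1 ∈ (maximalIdeal A ^ k).matrix n by
    obtain ⟨c, hc⟩ := this N
    rw [hN, Ideal.zero_eq_bot, Ideal.matrix_bot, Ideal.mem_bot, sub_eq_zero] at hc
    exact ⟨c, hc⟩
  intro k
  induction k with
  | zero => exact ⟨0, by simp [Ideal.matrix_top]⟩
  | succ k ih =>
    obtain ⟨c, hc⟩ := ih
    obtain ⟨d, hd⟩ := hρ.exists_sub_smul_one_mem_matrix _ (T - c • 1) fun g =>
      commutator_mem_matrix_pow_succ (hS g) hc
        (Commute.sub_left (hT g) ((Commute.one_left _).smul_left c))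
    exact ⟨c + d, by rwa [add_smul, ← sub_sub]⟩

end HasScalarCommutant

end Matrix

namespace Matrix.GeneralLinearGroup
variable {R S n : Type*} [CommRing R] [CommRing S] [Fintype n] [DecidableEq n]

theorem exists_mapMatrix_mul_scalar_eq_one (f : R →+* S) [IsLocalHom f] (P : GL n R) {c : S}
    (hP : f.mapMatrix (P : Matrix n n R) = c • 1) :
    ∃ u : Rˣ, f.mapMatrix ((P * scalar n u⁻¹ : GL n R) : Matrix n n R) = 1 := by
  cases isEmpty_or_nonempty n
  · exact ⟨1, Subsingleton.elim _ _⟩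
  obtain ⟨k⟩ : Nonempty n := inferInstance
  have hPk : f (P k k) = c := by simpa using congrFun₂ hP k k
  have hc : c * f ((P⁻¹ : GL n R) k k) = 1 := by
    have h := congrFun₂ (congrArg f.mapMatrix P.mul_inv) k k
    rwa [map_mul, hP, map_one, smul_mul_assoc, one_mul, smul_apply,
      one_apply_eq] at h
  obtain ⟨u, hu⟩ := isUnit_of_map_unit f (P k k) (hPk ▸ IsUnit.of_mul_eq_one _ hc)
  have hcu : c * f ↑u⁻¹ = 1 := by rw [← hPk, ← hu, ← map_mul, Units.mul_inv, map_one]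
  refine ⟨u, ?_⟩
  rw [Units.val_mul, map_mul, hP, coe_scalar, smul_mul_assoc, one_mul]
  ext i j
  rcases eq_or_ne i j with rfl | hij
  · simp [hcu]
  · simp [hij]

theorem conj_mul_scalar (P x : GL n R) (u : Rˣ) :
    (P * scalar n u)⁻¹ * x * (P * scalar n u) = P⁻¹ * x * P := by
  calc (P * scalar n u)⁻¹ * x * (P * scalar n u)
      = (scalar n u)⁻¹ * ((P⁻¹ * x * P) * scalar n u) := by group
    _ = P⁻¹ * x * P := by rw [← scalar_commute, inv_mul_cancel_left]

end Matrix.GeneralLinearGroup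

theorem stmt_17_general (F : Type*) [Field F] (G : Type*) [Group G] (r : ℕ)
    (ρ₀ : G →* Matrix.GeneralLinearGroup (Fin r) F)
    (h₀ : ∀ T : Matrix (Fin r) (Fin r) F,
      (∀ g : G, T * (ρ₀ g : Matrix (Fin r) (Fin r) F)
        = (ρ₀ g : Matrix (Fin r) (Fin r) F) * T) →
      ∃ c : F, T = c • (1 : Matrix (Fin r) (Fin r) F))
    (A' A : Type*) [CommRing A'] [IsLocalRing A'] [IsArtinianRing A'] [Algebra F A']
    [CommRing A] [IsLocalRing A] [IsArtinianRing A] [Algebra F A]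
    (φ : A' →ₐ[F] A)
    (ρ₁ ρ₂ : G →* Matrix.GeneralLinearGroup (Fin r) A')
    (hcong : ∀ (g : G) (i j : Fin r),
      ((ρ₁ g : Matrix (Fin r) (Fin r) A') - (ρ₂ g : Matrix (Fin r) (Fin r) A')) i j
        ∈ RingHom.ker (φ : A' →+* A))
    (hred₁ : ∀ (g : G) (i j : Fin r),
      ((ρ₁ g : Matrix (Fin r) (Fin r) A')
        - ((ρ₀ g : Matrix (Fin r) (Fin r) F)).map (algebraMap F A')) i j
        ∈ IsLocalRing.maximalIdeal A')
    (P : Matrix.GeneralLinearGroup (Fin r) A')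
    (hP : ∀ g : G, P⁻¹ * ρ₁ g * P = ρ₂ g) :
    ∃ P₁ : Matrix.GeneralLinearGroup (Fin r) A',
      (∀ i j, ((P₁ : Matrix (Fin r) (Fin r) A') - 1) i j ∈ RingHom.ker (φ : A' →+* A)) ∧
      ∀ g : G, P₁⁻¹ * ρ₁ g * P₁ = ρ₂ g := by
  set f : A' →+* A := (φ : A' →+* A)
  have : IsLocalHom f := isLocalHom_of_krullDimLE_zero f
  have hρ₁₂ : ∀ g, f.mapMatrix (ρ₁ g : Matrix (Fin r) (Fin r) A') = f.mapMatrix (ρ₂ g) :=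
    fun g => by ext i j; simpa [sub_eq_zero] using hcong g i j
  have hred : ∀ g, f.mapMatrix (ρ₁ g : Matrix (Fin r) (Fin r) A')
      - (ρ₀ g : Matrix (Fin r) (Fin r) F).map (algebraMap F A) ∈ (maximalIdeal A).matrix _ :=
    fun g => (Ideal.mem_matrix _ _ _).mpr fun i j => by
      simpa [f] using map_nonunit f _ (hred₁ g i j)
  have hcomm : ∀ g, Commute (f.mapMatrix (P : Matrix (Fin r) (Fin r) A'))
      (f.mapMatrix (ρ₁ g : Matrix (Fin r) (Fin r) A')) := fun g => by
    have h : P * ρ₂ g = ρ₁ g * P := by rw [← hP g]; group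
    have hf := congrArg (fun Q : GL (Fin r) A' => f.mapMatrix (Q : Matrix (Fin r) (Fin r) A')) h
    simp only [Units.val_mul, map_mul] at hf
    rwa [← hρ₁₂] at hf
  obtain ⟨c, hc⟩ := Matrix.HasScalarCommutant.of_sub_mem_maximalIdeal h₀ hred _ hcomm
  obtain ⟨u, hu⟩ := Matrix.GeneralLinearGroup.exists_mapMatrix_mul_scalar_eq_one f P hc
  refine ⟨P * Matrix.GeneralLinearGroup.scalar _ u⁻¹, fun i j => ?_, fun g => ?_⟩
  · simpa [sub_eq_zero] using congrFun₂ (hu.trans (map_one f.mapMatrix).symm) i j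
  · rw [Matrix.GeneralLinearGroup.conj_mul_scalar, hP]

/-- Lemma 1.5 (i): if `End_{F[G]}(F^r)` (via `ρ₀`) consists of scalars, and
`ρ₁, ρ₂ : G → GL_r(A')` are congruent modulo the kernel `𝔞` of `φ : A' → A` and reduce
to `ρ₀` modulo `𝔪_{A'}`, then equivalence of `ρ₁` and `ρ₂` implies strict equivalence
relative to `φ`: a conjugating matrix `P₁ ≡ I mod 𝔞` exists. -/
theorem stmt_17 (F : Type*) [Field F] (G : Type*) [Group G] (r : ℕ)
    (ρ₀ : G →* Matrix.GeneralLinearGroup (Fin r) F)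
    (h₀ : ∀ T : Matrix (Fin r) (Fin r) F,
      (∀ g : G, T * (ρ₀ g : Matrix (Fin r) (Fin r) F)
        = (ρ₀ g : Matrix (Fin r) (Fin r) F) * T) →
      ∃ c : F, T = c • (1 : Matrix (Fin r) (Fin r) F))
    (A' A : Type*) [CommRing A'] [IsLocalRing A'] [IsArtinianRing A'] [Algebra F A']
    [CommRing A] [IsLocalRing A] [IsArtinianRing A] [Algebra F A]
    (hA' : Function.Bijective (algebraMap F (A' ⧸ IsLocalRing.maximalIdeal A')))
    (hA : Function.Bijective (algebraMap F (A ⧸ IsLocalRing.maximalIdeal A)))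
    (φ : A' →ₐ[F] A)
    (ρ₁ ρ₂ : G →* Matrix.GeneralLinearGroup (Fin r) A')
    (hcong : ∀ (g : G) (i j : Fin r),
      ((ρ₁ g : Matrix (Fin r) (Fin r) A') - (ρ₂ g : Matrix (Fin r) (Fin r) A')) i j
        ∈ RingHom.ker (φ : A' →+* A))
    (hred₁ : ∀ (g : G) (i j : Fin r),
      ((ρ₁ g : Matrix (Fin r) (Fin r) A')
        - ((ρ₀ g : Matrix (Fin r) (Fin r) F)).map (algebraMap F A')) i j
        ∈ IsLocalRing.maximalIdeal A')
    (hred₂ : ∀ (g : G) (i j : Fin r),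
      ((ρ₂ g : Matrix (Fin r) (Fin r) A')
        - ((ρ₀ g : Matrix (Fin r) (Fin r) F)).map (algebraMap F A')) i j
        ∈ IsLocalRing.maximalIdeal A')
    (P : Matrix.GeneralLinearGroup (Fin r) A')
    (hP : ∀ g : G, P⁻¹ * ρ₁ g * P = ρ₂ g) :
    ∃ P₁ : Matrix.GeneralLinearGroup (Fin r) A',
      (∀ i j, ((P₁ : Matrix (Fin r) (Fin r) A') - 1) i j ∈ RingHom.ker (φ : A' →+* A)) ∧
      ∀ g : G, P₁⁻¹ * ρ₁ g * P₁ = ρ₂ g :=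
  stmt_17_general F G r ρ₀ h₀ A' A φ ρ₁ ρ₂ hcong hred₁ P hP
end
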